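/- arXiv:0712.1388 — 4 statements merged into one kernel-verified Lean document; each statement's English description precedes it below -/
import Mathlib

section
/- Let F_1, …, F_D be N×N complex Hermitian matrices. Then exactly one of the following two systems is feasible: (a) there exists x ∈ ℝ^D such that the matrix x_1 F_1 + ⋯ + x_D F_D + I is negative definite; (b) there exists an N×N complex Hermitian matrix Z such that Z is positive semidefinite, Z ≠ 0, and Tr(F_i Z) = 0 for all i = 1, …, D. (That is, (b) is feasible if and only if (a) is infeasible.) -/
open Matrix
open scoped ComplexOrder

/-!
If `M = -(∑ xᵢ Fᵢ + I)` is positive definite and `Z` is as in (b), then `tr (M Z) = -tr Z < 0`,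
whereas the trace of a product of positive semidefinite matrices is nonnegative.

Conversely, if (b) fails, then `0` lies outside the image of the compact convex set of density
matrices under the real-linear map `Z ↦ (Re tr (Fᵢ Z))ᵢ`. A separating hyperplane gives `x` with
`Re tr ((∑ xᵢ Fᵢ) Z) < -1` for every density matrix `Z`, and testing this on `Z = v vᴴ / ‖v‖²`
shows that `∑ xᵢ Fᵢ + I` is negative definite.
-/

namespace Matrix

variable {n 𝕜 : Type*} [Fintype n] [RCLike 𝕜]

theorem trace_mul_vecMulVec_star (A : Matrix n n 𝕜) (v : n → 𝕜) :
    (A * vecMulVec v (star v)).trace = star v ⬝ᵥ (A *ᵥ v) := by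
  rw [mul_vecMulVec, trace_vecMulVec, dotProduct_comm]

theorem PosSemidef.trace_mul_nonneg {A B : Matrix n n 𝕜} (hA : A.PosSemidef)
    (hB : B.PosSemidef) : 0 ≤ (A * B).trace := by
  obtain ⟨m, v, rfl⟩ := posSemidef_iff_eq_sum_vecMulVec.mp hB
  simp only [Matrix.mul_sum, trace_sum, trace_mul_vecMulVec_star]
  exact Finset.sum_nonneg fun i _ => hA.dotProduct_mulVec_nonneg _

theorem IsHermitian.im_trace_mul_eq_zero {A B : Matrix n n ℂ} (hA : A.IsHermitian)
    (hB : B.IsHermitian) : (A * B).trace.im = 0 := by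
  rw [← Complex.conj_eq_iff_im, ← Complex.star_def, ← trace_conjTranspose, conjTranspose_mul,
    hA.eq, hB.eq, trace_mul_comm]

open scoped MatrixOrder Matrix.Norms.L2Operator in
theorem PosSemidef.l2_opNorm_le_re_trace [DecidableEq n] {A : Matrix n n ℂ}
    (hA : A.PosSemidef) : ‖A‖ ≤ A.trace.re := by
  cases isEmpty_or_nonempty n
  · rw [Subsingleton.elim A 0, norm_zero, trace_zero, Complex.zero_re]
  have hmem := CStarAlgebra.norm_mem_spectrum_of_nonneg hA.nonneg
  rw [hA.1.spectrum_real_eq_range_eigenvalues] at hmem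
  obtain ⟨i, hi⟩ := hmem
  calc ‖A‖ = hA.1.eigenvalues i := hi.symm
    _ ≤ ∑ j, hA.1.eigenvalues j :=
      Finset.single_le_sum (fun j _ => hA.eigenvalues_nonneg j) (Finset.mem_univ i)
    _ = A.trace.re := by simp [hA.1.trace_eq_sum_eigenvalues]

end Matrix

def densityMatrices (n : Type*) [Fintype n] : Set (Matrix n n ℂ) :=
  {Z | Z.PosSemidef ∧ Z.trace = 1}

section

variable {n : Type*} [Fintype n]

theorem convex_densityMatrices : Convex ℝ (densityMatrices n) := by
  rintro Z ⟨hZ, hZ1⟩ W ⟨hW, hW1⟩ a b ha hb hab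
  refine ⟨(hZ.smul ha).add (hW.smul hb), ?_⟩
  simp [trace_add, trace_smul, hZ1, hW1, ← Complex.ofReal_add, hab]

open scoped MatrixOrder Matrix.Norms.L2Operator in
theorem isCompact_densityMatrices : IsCompact (densityMatrices n) := by
  classical
  have hclosed : IsClosed (densityMatrices n) := by
    have hS : densityMatrices n = {Z | 0 ≤ Z} ∩ {Z | Z.trace = 1} := by
      ext Z
      simp [densityMatrices, nonneg_iff_posSemidef]
    rw [hS]
    exact CStarAlgebra.isClosed_nonneg.inter
      (isClosed_eq continuous_id.matrix_trace continuous_const)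
  have hbdd : densityMatrices n ⊆ Metric.closedBall (0 : Matrix n n ℂ) 1 := fun Z hZ => by
    simpa [hZ.2] using hZ.1.l2_opNorm_le_re_trace
  exact (isCompact_closedBall _ _).of_isClosed_subset hclosed hbdd

theorem posDef_neg_of_forall_re_trace_mul_neg {H : Matrix n n ℂ} (hH : H.IsHermitian)
    (h : ∀ Z ∈ densityMatrices n, (H * Z).trace.re < 0) : (-H).PosDef := by
  refine .of_dotProduct_mulVec_pos hH.neg fun v hv => ?_
  obtain ⟨r, hr, hq⟩ := RCLike.pos_iff_exists_ofReal.mp (dotProduct_star_self_pos_iff.mpr hv)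
  have hZ : ((r⁻¹ : ℝ) : ℂ) • vecMulVec v (star v) ∈ densityMatrices n := by
    refine ⟨(posSemidef_vecMulVec_self_star v).smul ?_, ?_⟩
    · exact_mod_cast (inv_pos.mpr hr).le
    · rw [trace_smul, trace_vecMulVec, dotProduct_comm, ← hq]
      simp [hr.ne']
  have hre := h _ hZ
  rw [mul_smul_comm, trace_smul, trace_mul_vecMulVec_star, smul_eq_mul,
    Complex.re_ofReal_mul] at hre
  rw [neg_mulVec, dotProduct_neg, Complex.lt_def]
  refine ⟨?_, by simpa using hH.im_star_dotProduct_mulVec_self v⟩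
  simpa using neg_pos.mpr (neg_of_mul_neg_right hre (inv_pos.mpr hr).le)

variable {ι : Type*} [Fintype ι]

def reTraceMap (F : ι → Matrix n n ℂ) : Matrix n n ℂ →ₗ[ℝ] ι → ℝ where
  toFun Z i := (F i * Z).trace.re
  map_add' Z W := by ext i; simp [Matrix.mul_add, trace_add]
  map_smul' c Z := by ext i; simp [trace_smul]

theorem re_trace_sum_smul_mul (F : ι → Matrix n n ℂ) (x : ι → ℝ) (Z : Matrix n n ℂ) :
    ((∑ i, (x i : ℂ) • F i) * Z).trace.re = ∑ i, x i * reTraceMap F Z i := by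
  simp [reTraceMap, Finset.sum_mul, trace_sum, trace_smul, Complex.re_sum]

theorem exists_forall_re_trace_lt_neg_one (F : ι → Matrix n n ℂ)
    (h : (0 : ι → ℝ) ∉ reTraceMap F '' densityMatrices n) :
    ∃ x : ι → ℝ, ∀ Z ∈ densityMatrices n, ((∑ i, (x i : ℂ) • F i) * Z).trace.re < -1 := by
  classical
  have hcont : Continuous (reTraceMap F) := LinearMap.continuous_of_finiteDimensional _
  obtain ⟨f, u, hfu, hu⟩ := geometric_hahn_banach_closed_point
    (convex_densityMatrices.linear_image _) (isCompact_densityMatrices.image hcont).isClosed h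
  rw [map_zero] at hu
  have hf : ∀ p : ι → ℝ, f p = ∑ i, p i * f (Pi.single i 1) := fun p => by
    conv_lhs => rw [← Finset.univ_sum_single p]
    refine (map_sum f _ _).trans (Finset.sum_congr rfl fun i _ => ?_)
    rw [← smul_eq_mul, ← map_smul, ← Pi.single_smul', smul_eq_mul, mul_one]
  -- `f < u < 0` on the image; rescaling `f` by `-u⁻¹ > 0` moves the bound to `-1`.
  refine ⟨fun i => -u⁻¹ * f (Pi.single i 1), fun Z hZ => ?_⟩
  calc ((∑ i, ((-u⁻¹ * f (Pi.single i 1) : ℝ) : ℂ) • F i) * Z).trace.re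
      = -u⁻¹ * f (reTraceMap F Z) := by
        rw [re_trace_sum_smul_mul, hf, Finset.mul_sum]
        exact Finset.sum_congr rfl fun i _ => by ring
    _ < -u⁻¹ * u :=
      mul_lt_mul_of_pos_left (hfu _ ⟨Z, hZ, rfl⟩) (neg_pos.mpr (inv_lt_zero.mpr hu))
    _ = -1 := by rw [neg_mul, inv_mul_cancel₀ hu.ne]

end

/-- Strong alternatives for the SDP feasibility problem:
(b) (∃ Z Hermitian PSD, Z ≠ 0, Tr(F_i Z) = 0 ∀i) is feasible iff
(a) (∃ x, ∑ x_i F_i + I is negative definite) is infeasible. -/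
theorem strong_alternatives (D N : ℕ) (F : Fin D → Matrix (Fin N) (Fin N) ℂ)
    (hF : ∀ i, (F i).IsHermitian) :
    (∃ Z : Matrix (Fin N) (Fin N) ℂ, Z.IsHermitian ∧ Z.PosSemidef ∧ Z ≠ 0 ∧
        ∀ i, (F i * Z).trace = 0) ↔
      ¬ (∃ x : Fin D → ℝ, (-(∑ i, (x i : ℂ) • F i + 1)).PosDef) := by
  constructor
  · rintro ⟨Z, -, hZ, hZ0, hFZ⟩ ⟨x, hx⟩
    have htrace : ((-(∑ i, (x i : ℂ) • F i + 1)) * Z).trace = -Z.trace := by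
      simp [add_mul, Finset.sum_mul, trace_sum, trace_smul, hFZ]
    have hpos : 0 < Z.trace :=
      hZ.trace_nonneg.lt_of_ne (Ne.symm (mt hZ.trace_eq_zero_iff.mp hZ0))
    have hnonneg := hx.posSemidef.trace_mul_nonneg hZ
    rw [htrace, neg_nonneg] at hnonneg
    exact hpos.not_ge hnonneg
  · intro hna
    by_contra hnb
    have h0 : (0 : Fin D → ℝ) ∉ reTraceMap F '' densityMatrices (Fin N) := by
      rintro ⟨Z, ⟨hZ, hZ1⟩, hFZ⟩
      refine hnb ⟨Z, hZ.isHermitian, hZ, fun h => by simp [h] at hZ1, fun i => ?_⟩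
      exact Complex.ext (congrFun hFZ i) ((hF i).im_trace_mul_eq_zero hZ.isHermitian)
    obtain ⟨x, hx⟩ := exists_forall_re_trace_lt_neg_one F h0
    have hH : (∑ i, (x i : ℂ) • F i + 1).IsHermitian :=
      (isSelfAdjoint_sum _ fun i _ => (hF i).smul (Complex.conj_ofReal _)).add isHermitian_one
    refine hna ⟨x, posDef_neg_of_forall_re_trace_mul_neg hH fun Z hZ => ?_⟩
    have := hx Z hZ
    simp only [add_mul, one_mul, trace_add, Complex.add_re, hZ.2, Complex.one_re]
    linarith
end

section
/- Let σ be a complex matrix indexed by pairs from A × B, where A = {0,1}^n indexes n qubits and B is any finite index type. Then the partial trace of σ over B satisfies Tr_B(σ) = 2^{−n} · ∑_p Tr((σ_p ⊗ I_B) · σ) · σ_p, where the sum ranges over all strings p : {1,…,n} → {0,1,2,3}. -/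
open Matrix
open scoped Kronecker

/-- The single-qubit Pauli matrices I, X, Y, Z. -/
noncomputable def pauli : Fin 4 → Matrix (Fin 2) (Fin 2) ℂ
  | 0 => 1
  | 1 => !![0, 1; 1, 0]
  | 2 => !![0, -Complex.I; Complex.I, 0]
  | 3 => !![1, 0; 0, -1]

/-- The n-qubit Pauli matrix σ_p = σ_{p 1} ⊗ ⋯ ⊗ σ_{p n}. -/
noncomputable def pauliN {n : ℕ} (p : Fin n → Fin 4) :
    Matrix (Fin n → Fin 2) (Fin n → Fin 2) ℂ :=
  fun s t => ∏ i, pauli (p i) (s i) (t i)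

/-- The partial trace over the second tensor factor:
(Tr_B σ)_{s,t} = ∑_{k ∈ B} σ_{(s,k),(t,k)}. -/
noncomputable def partialTraceB {A B : Type*} [Fintype B]
    (σ : Matrix (A × B) (A × B) ℂ) : Matrix A A ℂ :=
  fun s t => ∑ k : B, σ (s, k) (t, k)

/-!
The Pauli strings satisfy the completeness relation
`∑_p (σ_p)_{uv} (σ_p)_{st} = 2^n δ_{ut} δ_{vs}`, the `n`-fold tensor power of the single-qubit
relation, so every `τ : Matrix A A ℂ` expands as `τ = 2^{-n} ∑_p Tr(σ_p τ) σ_p`.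
Apply this to `τ = Tr_B σ`, using `Tr((M ⊗ I_B) σ) = Tr(M Tr_B σ)`.
-/

theorem Matrix.prod_one_apply {ι α R : Type*} [Fintype ι] [DecidableEq α] [CommMonoidWithZero R]
    (u t : ι → α) :
    ∏ i, (1 : Matrix α α R) (u i) (t i) = (1 : Matrix (ι → α) (ι → α) R) u t := by
  simp only [one_apply, Finset.prod_ite_zero, Finset.prod_const_one, Finset.mem_univ,
    true_implies, funext_iff]

theorem Matrix.eq_inv_smul_sum_trace_mul_smul {K A ι : Type*} [Field K] [Fintype A]
    [DecidableEq A] [Fintype ι] (P : ι → Matrix A A K) {c : K} (hc : c ≠ 0)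
    (hP : ∀ u v s t,
      ∑ p, P p u v * P p s t = c * ((1 : Matrix A A K) u t * (1 : Matrix A A K) v s))
    (τ : Matrix A A K) :
    τ = c⁻¹ • ∑ p, (P p * τ).trace • P p := by
  ext s t
  have hexpand : ∑ p, (P p * τ).trace * P p s t = c * τ s t := by
    simp only [trace, diag, mul_apply, Finset.sum_mul]
    calc ∑ p, ∑ u, ∑ v, P p u v * τ v u * P p s t
        = ∑ u, ∑ v, τ v u * ∑ p, P p u v * P p s t := by
          rw [Finset.sum_comm]
          refine Finset.sum_congr rfl fun u _ => ?_
          rw [Finset.sum_comm]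
          simp only [Finset.mul_sum]
          exact Finset.sum_congr rfl fun v _ => Finset.sum_congr rfl fun p _ => by ring
      _ = c * τ s t := by simp [hP, one_apply, mul_comm]
  simp [Matrix.sum_apply, hexpand, hc]

theorem sum_pauli_apply_mul_pauli_apply (u v s t : Fin 2) :
    ∑ a, pauli a u v * pauli a s t =
      2 * ((1 : Matrix (Fin 2) (Fin 2) ℂ) u t * (1 : Matrix (Fin 2) (Fin 2) ℂ) v s) := by
  fin_cases u <;> fin_cases v <;> fin_cases s <;> fin_cases t <;>
    simp [pauli, Fin.sum_univ_four, one_add_one_eq_two]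

theorem sum_pauliN_apply_mul_pauliN_apply {n : ℕ} (u v s t : Fin n → Fin 2) :
    ∑ p : Fin n → Fin 4, pauliN p u v * pauliN p s t =
      2 ^ n * ((1 : Matrix _ _ ℂ) u t * (1 : Matrix _ _ ℂ) v s) := by
  simp only [pauliN, ← Finset.prod_mul_distrib]
  rw [← Fintype.prod_sum (fun i a => pauli a (u i) (v i) * pauli a (s i) (t i))]
  simp only [sum_pauli_apply_mul_pauli_apply, Finset.prod_mul_distrib, Matrix.prod_one_apply,
    Finset.prod_const, Finset.card_univ, Fintype.card_fin]

theorem trace_kronecker_one_mul {A B : Type*} [Fintype A] [Fintype B] [DecidableEq B]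
    (M : Matrix A A ℂ) (σ : Matrix (A × B) (A × B) ℂ) :
    ((M ⊗ₖ (1 : Matrix B B ℂ)) * σ).trace = (M * partialTraceB σ).trace := by
  simp only [trace, diag, mul_apply, kroneckerMap_apply, partialTraceB, Fintype.sum_prod_type,
    one_apply, mul_ite, mul_one, mul_zero, ite_mul, zero_mul, Finset.sum_ite_eq, Finset.mem_univ,
    if_true, Finset.mul_sum]
  exact Finset.sum_congr rfl fun _ _ => Finset.sum_comm

/-- the partial trace over B expands in the Pauli basis:
Tr_B(σ) = 2^{-n} ∑_p Tr((σ_p ⊗ I_B) σ) σ_p. -/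
theorem partialTrace_pauli_expansion (n : ℕ) (B : Type*) [Fintype B] [DecidableEq B]
    (σ : Matrix ((Fin n → Fin 2) × B) ((Fin n → Fin 2) × B) ℂ) :
    partialTraceB σ =
      ((2 : ℂ) ^ n)⁻¹ •
        ∑ p : Fin n → Fin 4, ((pauliN p ⊗ₖ (1 : Matrix B B ℂ)) * σ).trace • pauliN p := by
  simp only [trace_kronecker_one_mul]
  exact Matrix.eq_inv_smul_sum_trace_mul_smul pauliN (pow_ne_zero n two_ne_zero)
    sum_pauliN_apply_mul_pauliN_apply (partialTraceB σ)
end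

section
/- Let ρ and τ be 2^n × 2^n complex Hermitian matrices with Tr(ρ) = Tr(τ). Then their trace-norm distance satisfies ‖τ − ρ‖₁ ≤ ∑_{p ≠ 0} |Tr(σ_p τ) − Tr(σ_p ρ)|, where the sum ranges over all strings p : {1,…,n} → {0,1,2,3} other than the all-zero string (i.e., excluding the identity Pauli matrix). -/
open Matrix
open scoped ComplexOrder

/-- The positive semidefinite square root of a positive semidefinite matrix
(the definition removed from Mathlib, restated with its old value). -/
noncomputable def Matrix.PosSemidef.sqrt {m : Type*} [Fintype m] [DecidableEq m]
    {A : Matrix m m ℂ} (hA : A.PosSemidef) : Matrix m m ℂ :=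
  hA.1.eigenvectorUnitary.1 * diagonal ((↑) ∘ (√·) ∘ hA.1.eigenvalues) *
    (star hA.1.eigenvectorUnitary : Matrix m m ℂ)

/-- The trace norm ‖A‖₁ = Tr √(A†A), the sum of the singular values of A. -/
noncomputable def traceNorm {n : ℕ}
    (A : Matrix (Fin n → Fin 2) (Fin n → Fin 2) ℂ) : ℝ :=
  ((Matrix.posSemidef_conjTranspose_mul_self A).sqrt).trace.re

/-! Write `M = τ - ρ`. The Pauli strings are orthogonal, so
`2 ^ n • M = ∑ p, Tr(σ_p M) • σ_p`, and the identity string contributes `Tr M = 0`.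
Diagonalising `M = U D U†`, each eigenvalue is
`λ_i = (U† M U)_ii = 2⁻ⁿ ∑_{p ≠ 0} Tr(σ_p M) (U† σ_p U)_ii`,
and the entries of the unitary `U† σ_p U` have modulus at most `1`.
Summing `|λ_i|` over the `2 ^ n` indices gives the bound. -/

namespace Matrix

section Spectral

variable {m ι : Type*} [Fintype m] [DecidableEq m]

lemma PosSemidef.sqrt_eq_cfc {A : Matrix m m ℂ} (hA : A.PosSemidef) :
    hA.sqrt = cfc Real.sqrt A := by
  rw [hA.1.cfc_eq]; rfl

lemma IsHermitian.trace_cfc {A : Matrix m m ℂ} (hA : A.IsHermitian) (f : ℝ → ℝ) :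
    (cfc f A).trace = ∑ i, (f (hA.eigenvalues i) : ℂ) := by
  rw [hA.cfc_eq, IsHermitian.cfc, Unitary.conjStarAlgAut_apply, trace_mul_cycle,
    Unitary.coe_star_mul_self, one_mul, trace_diagonal]
  rfl

lemma IsHermitian.sqrt_conjTranspose_mul_self_eq_cfc_abs {A : Matrix m m ℂ}
    (hA : A.IsHermitian) :
    (posSemidef_conjTranspose_mul_self A).sqrt = cfc (fun x : ℝ => |x|) A := by
  rw [PosSemidef.sqrt_eq_cfc, hA.eq, ← sq, ← cfc_comp_pow Real.sqrt 2 A]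
  simp only [Real.sqrt_sq_eq_abs]

lemma IsHermitian.exists_unitary_eigenvalues_eq_diag {A : Matrix m m ℂ} (hA : A.IsHermitian) :
    ∃ U ∈ unitaryGroup m ℂ, ∀ i,
      (hA.eigenvalues i : ℂ) = (star U * A * U : Matrix m m ℂ) i i := by
  have hdiag := hA.conjStarAlgAut_star_eigenvectorUnitary
  rw [Unitary.conjStarAlgAut_apply, Unitary.coe_star, star_star] at hdiag
  exact ⟨_, hA.eigenvectorUnitary.2, fun i => by simp [hdiag]⟩

lemma IsHermitian.abs_eigenvalues_le_sum_norm {A : Matrix m m ℂ} (hA : A.IsHermitian)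
    {s : Finset ι} {c : ι → ℂ} {W : ι → Matrix m m ℂ}
    (hW : ∀ p ∈ s, W p ∈ unitaryGroup m ℂ) (hAW : A = ∑ p ∈ s, c p • W p) (i : m) :
    |hA.eigenvalues i| ≤ ∑ p ∈ s, ‖c p‖ := by
  obtain ⟨U, hU, hdiag⟩ := hA.exists_unitary_eigenvalues_eq_diag
  calc |hA.eigenvalues i| = ‖∑ p ∈ s, c p * (star U * W p * U : Matrix m m ℂ) i i‖ := by
        rw [← Real.norm_eq_abs, ← Complex.norm_real, hdiag, hAW]
        simp [Matrix.mul_sum, Matrix.sum_mul, sum_apply]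
    _ ≤ ∑ p ∈ s, ‖c p‖ * ‖(star U * W p * U : Matrix m m ℂ) i i‖ := by
        simpa only [norm_mul] using norm_sum_le s fun p => c p * (star U * W p * U) i i
    _ ≤ ∑ p ∈ s, ‖c p‖ := by
        gcongr with p hp
        refine mul_le_of_le_one_right (norm_nonneg _) (entry_norm_bound_of_unitary ?_ i i)
        exact mul_mem (mul_mem (Unitary.star_mem hU) (hW p hp)) hU

lemma IsHermitian.sum_abs_eigenvalues_le_card_mul_sum_norm {A : Matrix m m ℂ}
    (hA : A.IsHermitian) {s : Finset ι} {c : ι → ℂ} {W : ι → Matrix m m ℂ}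
    (hW : ∀ p ∈ s, W p ∈ unitaryGroup m ℂ)
    (hAW : A = ∑ p ∈ s, c p • W p) :
    ∑ i, |hA.eigenvalues i| ≤ Fintype.card m * ∑ p ∈ s, ‖c p‖ := by
  have := Finset.sum_le_card_nsmul Finset.univ _ _ fun i _ =>
    hA.abs_eigenvalues_le_sum_norm hW hAW i
  rwa [Finset.card_univ, nsmul_eq_mul] at this

end Spectral

section PiKronecker

variable {ι α β γ R : Type*} [Fintype ι]

def piKronecker [CommMonoid R] (A : ι → Matrix α β R) : Matrix (ι → α) (ι → β) R :=
  fun s t => ∏ i, A i (s i) (t i)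

lemma piKronecker_mul [DecidableEq ι] [Fintype β] [CommSemiring R] (A : ι → Matrix α β R)
    (B : ι → Matrix β γ R) :
    piKronecker A * piKronecker B = piKronecker fun i => A i * B i := by
  ext s t
  simp only [mul_apply, piKronecker, ← Finset.prod_mul_distrib, Fintype.prod_sum]

lemma conjTranspose_piKronecker [CommSemiring R] [StarRing R] (A : ι → Matrix α β R) :
    (piKronecker A)ᴴ = piKronecker fun i => (A i)ᴴ := by
  ext s t
  simp [piKronecker, star_prod]

lemma piKronecker_one [DecidableEq α] [CommSemiring R] :
    piKronecker (fun _ : ι => (1 : Matrix α α R)) = 1 := by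
  ext s t
  simp [piKronecker, one_apply, Finset.prod_boole, funext_iff]

end PiKronecker

end Matrix

lemma traceNorm_eq_sum_abs_eigenvalues {n : ℕ}
    {A : Matrix (Fin n → Fin 2) (Fin n → Fin 2) ℂ} (hA : A.IsHermitian) :
    traceNorm A = ∑ i, |hA.eigenvalues i| := by
  rw [traceNorm, hA.sqrt_conjTranspose_mul_self_eq_cfc_abs, hA.trace_cfc, Complex.re_sum]
  rfl

lemma pauliN_eq_piKronecker {n : ℕ} (p : Fin n → Fin 4) :
    pauliN p = piKronecker fun i => pauli (p i) :=
  rfl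

lemma conjTranspose_pauli_mul_self (k : Fin 4) : (pauli k)ᴴ * pauli k = 1 := by
  fin_cases k <;> ext a b <;> fin_cases a <;> fin_cases b <;>
    simp [pauli, mul_apply, Fin.sum_univ_two]

lemma pauliN_mem_unitaryGroup {n : ℕ} (p : Fin n → Fin 4) :
    pauliN p ∈ unitaryGroup (Fin n → Fin 2) ℂ := by
  rw [mem_unitaryGroup_iff', star_eq_conjTranspose, pauliN_eq_piKronecker,
    conjTranspose_piKronecker, piKronecker_mul]
  simp only [conjTranspose_pauli_mul_self, piKronecker_one]

lemma pauliN_zero {n : ℕ} : pauliN (fun _ : Fin n => 0) = 1 :=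
  piKronecker_one

lemma sum_pauli_mul_pauli (a b c d : Fin 2) :
    ∑ k, pauli k a b * pauli k c d =
      2 * ((1 : Matrix (Fin 2) (Fin 2) ℂ) a d * (1 : Matrix (Fin 2) (Fin 2) ℂ) b c) := by
  fin_cases a <;> fin_cases b <;> fin_cases c <;> fin_cases d <;>
    simp [pauli, Fin.sum_univ_four] <;> norm_num

lemma sum_pauliN_mul_pauliN {n : ℕ} (a b c d : Fin n → Fin 2) :
    ∑ p : Fin n → Fin 4, pauliN p a b * pauliN p c d =
      2 ^ n * ((1 : Matrix (Fin n → Fin 2) (Fin n → Fin 2) ℂ) a d *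
        (1 : Matrix (Fin n → Fin 2) (Fin n → Fin 2) ℂ) b c) := by
  calc ∑ p : Fin n → Fin 4, pauliN p a b * pauliN p c d
      = ∑ p : Fin n → Fin 4, ∏ i, pauli (p i) (a i) (b i) * pauli (p i) (c i) (d i) := by
        simp only [pauliN, Finset.prod_mul_distrib]
    _ = ∏ i, ∑ k, pauli k (a i) (b i) * pauli k (c i) (d i) :=
        (Fintype.prod_sum fun i k => pauli k (a i) (b i) * pauli k (c i) (d i)).symm
    _ = ∏ i, 2 * ((1 : Matrix (Fin 2) (Fin 2) ℂ) (a i) (d i) *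
          (1 : Matrix (Fin 2) (Fin 2) ℂ) (b i) (c i)) := by
        simp only [sum_pauli_mul_pauli]
    _ = _ := by
        rw [Finset.prod_mul_distrib, Finset.prod_mul_distrib, Finset.prod_const, Finset.card_univ,
          Fintype.card_fin, ← piKronecker_one]
        rfl

lemma sum_trace_pauliN_mul_smul_pauliN {n : ℕ}
    (M : Matrix (Fin n → Fin 2) (Fin n → Fin 2) ℂ) :
    ∑ p, (pauliN p * M).trace • pauliN p = (2 ^ n : ℂ) • M := by
  ext s t
  calc (∑ p, (pauliN p * M).trace • pauliN p) s t
      = ∑ a, ∑ b, M b a * ∑ p : Fin n → Fin 4, pauliN p a b * pauliN p s t := by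
        simp only [Matrix.sum_apply, Matrix.smul_apply, smul_eq_mul, trace, diag_apply, mul_apply,
          Finset.sum_mul, Finset.mul_sum]
        rw [Finset.sum_comm]
        refine Finset.sum_congr rfl fun a _ => ?_
        rw [Finset.sum_comm]
        simp only [mul_comm, mul_left_comm]
    _ = ∑ a, ∑ b, M b a * (2 ^ n * ((1 : Matrix (Fin n → Fin 2) (Fin n → Fin 2) ℂ) a t *
          (1 : Matrix (Fin n → Fin 2) (Fin n → Fin 2) ℂ) b s)) := by
        simp only [sum_pauliN_mul_pauliN]
    _ = ((2 ^ n : ℂ) • M) s t := by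
        simp [one_apply, mul_comm]

lemma eq_sum_pauliN_of_trace_eq_zero {n : ℕ} {M : Matrix (Fin n → Fin 2) (Fin n → Fin 2) ℂ}
    (hM : M.trace = 0) :
    M = ∑ p ∈ Finset.univ.filter (fun p : Fin n → Fin 4 => p ≠ fun _ => 0),
      ((2 ^ n : ℂ)⁻¹ * (pauliN p * M).trace) • pauliN p := by
  rw [Finset.filter_ne', Finset.sum_erase _ (by simp [pauliN_zero, hM])]
  simp only [mul_smul, ← Finset.smul_sum, sum_trace_pauliN_mul_smul_pauliN]
  rw [inv_smul_smul₀ (by positivity)]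

/-- for Hermitian ρ, τ with equal traces,
‖τ − ρ‖₁ ≤ ∑_{p ≠ 0} |Tr(σ_p τ) − Tr(σ_p ρ)|, the sum ranging over all non-identity
Pauli strings. -/
theorem traceNorm_diff_le_sum_pauli (n : ℕ)
    (ρ τ : Matrix (Fin n → Fin 2) (Fin n → Fin 2) ℂ)
    (hρ : ρ.IsHermitian) (hτ : τ.IsHermitian) (htr : ρ.trace = τ.trace) :
    traceNorm (τ - ρ) ≤
      ∑ p ∈ Finset.univ.filter (fun p : Fin n → Fin 4 => p ≠ fun _ => 0),
        ‖(pauliN p * τ).trace - (pauliN p * ρ).trace‖ := by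
  have hM : (τ - ρ).IsHermitian := hτ.sub hρ
  have hexp := eq_sum_pauliN_of_trace_eq_zero (M := τ - ρ) (by rw [trace_sub, htr, sub_self])
  rw [traceNorm_eq_sum_abs_eigenvalues hM]
  refine (hM.sum_abs_eigenvalues_le_card_mul_sum_norm
    (fun p _ => pauliN_mem_unitaryGroup p) hexp).trans_eq ?_
  rw [Fintype.card_fun, Fintype.card_fin, Fintype.card_fin, Finset.mul_sum]
  refine Finset.sum_congr rfl fun p _ => ?_
  rw [norm_mul, norm_inv, norm_pow, Complex.norm_two, Matrix.mul_sub, trace_sub]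
  push_cast
  field_simp
end

section
/- Let H be an n×n real symmetric matrix whose off-diagonal entries are all ≤ 0 (a 'stoquastic' matrix). Then H has an eigenvector v ≠ 0 for its smallest eigenvalue λ_min(H) such that every entry of v is nonnegative. -/
/-!
With `λ` the smallest eigenvalue of `H`, the matrix `H - λ • 1` is positive semidefinite. As the
off-diagonal entries of `H` are nonpositive, replacing a ground state `w` by `|w|` keeps the norm
and cannot raise the energy `x ⬝ᵥ H *ᵥ x`. So the semidefinite form of `H - λ • 1` vanishes at
`|w|`, which forces `|w|` into its kernel: `|w|` is a nonnegative ground state.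
-/

open Matrix Unitary
open scoped ComplexOrder

namespace Matrix

section Spectrum

variable {ι 𝕜 : Type*} [Fintype ι] [DecidableEq ι] [RCLike 𝕜] {A : Matrix ι ι 𝕜}

theorem IsHermitian.posSemidef_sub_smul_one_iff (hA : A.IsHermitian) (c : ℝ) :
    (A - c • 1).PosSemidef ↔ ∀ i, c ≤ hA.eigenvalues i := by
  have hconj : A - c • 1 = conjStarAlgAut 𝕜 _ hA.eigenvectorUnitary
      (diagonal fun i => ((hA.eigenvalues i - c : ℝ) : 𝕜)) := by
    conv_lhs => rw [hA.spectral_theorem, RCLike.real_smul_eq_coe_smul (K := 𝕜),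
      ← map_one (conjStarAlgAut 𝕜 _ hA.eigenvectorUnitary), ← map_smul, ← map_sub]
    congr 1
    ext i j
    by_cases h : i = j <;> simp [h, RCLike.real_smul_eq_coe_mul]
  rw [hconj, conjStarAlgAut_apply, isUnit_coe.posSemidef_star_right_conjugate_iff,
    posSemidef_diagonal_iff]
  simp [sub_nonneg]

theorem IsHermitian.posSemidef_sub_iInf_eigenvalues_smul_one (hA : A.IsHermitian) :
    (A - (⨅ i, hA.eigenvalues i) • 1).PosSemidef :=
  (hA.posSemidef_sub_smul_one_iff _).mpr fun i => ciInf_le (Finite.bddBelow_range _) i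

end Spectrum

section Real

variable {ι : Type*} [Fintype ι]

theorem mulVec_eq_smul_of_dotProduct_mulVec_le [DecidableEq ι] {H : Matrix ι ι ℝ} {c : ℝ}
    (hH : (H - c • 1).PosSemidef) {x : ι → ℝ} (hx : x ⬝ᵥ H *ᵥ x ≤ c * (x ⬝ᵥ x)) :
    H *ᵥ x = c • x := by
  have hsub : (H - c • 1) *ᵥ x = H *ᵥ x - c • x := by
    rw [sub_mulVec, smul_mulVec, one_mulVec]
  have hform : x ⬝ᵥ (H - c • 1) *ᵥ x = 0 := by
    refine le_antisymm ?_ (by simpa using hH.dotProduct_mulVec_nonneg x)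
    rw [hsub, dotProduct_sub, dotProduct_smul, smul_eq_mul]
    linarith
  rw [← sub_eq_zero, ← hsub, ← hH.dotProduct_mulVec_zero_iff, star_trivial, hform]

end Real

section LinearOrderedRing

variable {ι R : Type*} [Fintype ι] [CommRing R] [LinearOrder R]

theorem abs_dotProduct_abs (x : ι → R) : |x| ⬝ᵥ |x| = x ⬝ᵥ x := by
  simp only [dotProduct, Pi.abs_apply, abs_mul_abs_self]

theorem abs_dotProduct_mulVec_abs_le [IsStrictOrderedRing R] {H : Matrix ι ι R}
    (hoff : ∀ i j, i ≠ j → H i j ≤ 0) (x : ι → R) : |x| ⬝ᵥ H *ᵥ |x| ≤ x ⬝ᵥ H *ᵥ x := by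
  simp only [dotProduct, mulVec, Pi.abs_apply, Finset.mul_sum]
  refine Finset.sum_le_sum fun i _ => Finset.sum_le_sum fun j _ => ?_
  rw [mul_left_comm, mul_left_comm (x i)]
  rcases eq_or_ne i j with rfl | hij
  · rw [abs_mul_abs_self]
  · exact mul_le_mul_of_nonpos_left ((le_abs_self _).trans (abs_mul _ _).le) (hoff i j hij)

end LinearOrderedRing

end Matrix

/-- Perron–Frobenius for stoquastic matrices: a real symmetric matrix
with nonpositive off-diagonal entries has an entrywise-nonnegative eigenvector for its
smallest eigenvalue. -/
theorem stoquastic_ground_state_nonneg (n : ℕ) (hn : 0 < n)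
    (H : Matrix (Fin n) (Fin n) ℝ) (hH : H.IsHermitian)
    (hoff : ∀ i j, i ≠ j → H i j ≤ 0) :
    ∃ v : Fin n → ℝ, v ≠ 0 ∧ H *ᵥ v = (⨅ i, hH.eigenvalues i) • v ∧ ∀ i, 0 ≤ v i := by
  have : Nonempty (Fin n) := ⟨⟨0, hn⟩⟩
  set lam := ⨅ i, hH.eigenvalues i
  obtain ⟨i₀, hi₀⟩ := exists_eq_ciInf_of_finite (f := hH.eigenvalues)
  set w : Fin n → ℝ := (hH.eigenvectorBasis i₀).ofLp
  have hw : H *ᵥ w = lam • w := by rw [hH.mulVec_eigenvectorBasis, hi₀]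
  have hw0 : w ≠ 0 :=
    (WithLp.ofLp_eq_zero (p := 2)).not.mpr (hH.eigenvectorBasis.orthonormal.ne_zero i₀)
  refine ⟨|w|, by simpa using hw0, ?_, fun i => abs_nonneg (w i)⟩
  refine mulVec_eq_smul_of_dotProduct_mulVec_le hH.posSemidef_sub_iInf_eigenvalues_smul_one ?_
  calc |w| ⬝ᵥ H *ᵥ |w| ≤ w ⬝ᵥ H *ᵥ w := abs_dotProduct_mulVec_abs_le hoff w
    _ = lam * (|w| ⬝ᵥ |w|) := by rw [hw, dotProduct_smul, smul_eq_mul, abs_dotProduct_abs]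
end
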